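/- Let Θ₃(r) denote the set of tensors A ∈ R^{d₁×d₂×d₃} whose Tucker ranks (ranks of the three matricizations) are each at most r. Define the approximate projection P̂_{Θ₃(r₂)}(Z) by successively applying best rank-r₂ approximation to the mode-1, mode-2, and mode-3 matricizations. Then for r₁ < r₂ < r₀, any Z ∈ Θ₃(r₀), and any Y ∈ Θ₃(r₁): ‖P̂_{Θ₃(r₂)}(Z) − Z‖_F ≤ (3β + 3β² + β³)·‖Y − Z‖_F, where β = sqrt((r₀−r₂)/(r₀−r₁)). -/

import Mathlib

/-- Frobenius norm of a real matrix. -/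
noncomputable def frobM {m n : Type*} [Fintype m] [Fintype n] (M : Matrix m n ℝ) : ℝ :=
  Real.sqrt (∑ i, ∑ j, (M i j) ^ 2)

/-- Frobenius norm of an order-3 tensor. -/
noncomputable def frobT {d₁ d₂ d₃ : ℕ} (A : Fin d₁ → Fin d₂ → Fin d₃ → ℝ) : ℝ :=
  Real.sqrt (∑ i, ∑ j, ∑ k, (A i j k) ^ 2)

/-- Mode-1 matricization. -/
def mat1 {d₁ d₂ d₃ : ℕ} (A : Fin d₁ → Fin d₂ → Fin d₃ → ℝ) :
    Matrix (Fin d₁) (Fin d₂ × Fin d₃) ℝ :=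
  Matrix.of fun i p => A i p.1 p.2

/-- Mode-2 matricization. -/
def mat2 {d₁ d₂ d₃ : ℕ} (A : Fin d₁ → Fin d₂ → Fin d₃ → ℝ) :
    Matrix (Fin d₂) (Fin d₁ × Fin d₃) ℝ :=
  Matrix.of fun j p => A p.1 j p.2

/-- Mode-3 matricization. -/
def mat3 {d₁ d₂ d₃ : ℕ} (A : Fin d₁ → Fin d₂ → Fin d₃ → ℝ) :
    Matrix (Fin d₃) (Fin d₁ × Fin d₂) ℝ :=
  Matrix.of fun k p => A p.1 p.2 k

/-- Membership in Θ₃(r): all three Tucker ranks at most `r`. -/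
def memTheta3 {d₁ d₂ d₃ : ℕ} (A : Fin d₁ → Fin d₂ → Fin d₃ → ℝ) (r : ℕ) : Prop :=
  (mat1 A).rank ≤ r ∧ (mat2 A).rank ≤ r ∧ (mat3 A).rank ≤ r

/-!
For one matricization `A` of rank `≤ r₀`, let `ν` be the eigenvalues of `Aᴴ * A` (at most `r₀` of
them nonzero) with an orthonormal eigenbasis `e`. Projecting onto the span of the `r₂` leading
vectors `e j` gives a competitor of rank `≤ r₂`, so a best approximation `W` has `‖A - W‖²` at most
the sum of the remaining `ν j`. For `B` of rank `≤ r₁`, `A - B` agrees with `A` on `ker B`, of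
dimension `≥ N - r₁`, and Bessel's inequality there gives `‖A - B‖² ≥ ∑ ν j * t j` for weights
`0 ≤ t ≤ 1` of total mass `≥ N - r₁`. Comparing both sums with the value of `ν` at the cut gives
`‖A - W‖ ≤ β ‖A - B‖`.

A best approximation is `P * A`, with `P` the orthogonal projection onto its column space, so the
successive projections keep the Tucker ranks of the later modes `≤ r₀` and the matrix bound applies
at each of the three steps; the triangle inequality chains the three errors into
`3β + 3β² + β³`.
-/

open Matrix Finset WithLp
open scoped RealInnerProductSpace Kronecker

attribute [local instance] Matrix.frobeniusNormedAddCommGroup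

section Frobenius

variable {m n : Type*} [Fintype m] [Fintype n]

theorem frobM_eq_norm (M : Matrix m n ℝ) : frobM M = ‖M‖ := by
  rw [frobM, frobenius_norm_def, Real.sqrt_eq_rpow]
  simp

theorem frobM_nonneg (M : Matrix m n ℝ) : 0 ≤ frobM M :=
  Real.sqrt_nonneg _

theorem frobM_sq_eq_sum_norm_sq_row (M : Matrix m n ℝ) :
    frobM M ^ 2 = ∑ a, ‖toLp 2 (M a)‖ ^ 2 := by
  rw [frobM, Real.sq_sqrt (by positivity)]
  simp [EuclideanSpace.real_norm_sq_eq]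

variable [DecidableEq n]

theorem norm_sq_toEuclideanLin (M : Matrix m n ℝ) (x : EuclideanSpace ℝ n) :
    ‖toEuclideanLin M x‖ ^ 2 = ∑ a, ⟪toLp 2 (M a), x⟫ ^ 2 := by
  simp [EuclideanSpace.real_norm_sq_eq, toLpLin_apply, mulVec,
    EuclideanSpace.inner_eq_star_dotProduct, dotProduct_comm]

theorem sum_norm_sq_toEuclideanLin_le {ι : Type*} [Fintype ι] {v : ι → EuclideanSpace ℝ n}
    (hv : Orthonormal ℝ v) (M : Matrix m n ℝ) :
    ∑ i, ‖toEuclideanLin M (v i)‖ ^ 2 ≤ frobM M ^ 2 := by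
  simp_rw [frobM_sq_eq_sum_norm_sq_row, norm_sq_toEuclideanLin]
  rw [sum_comm]
  gcongr with a
  simpa [real_inner_comm] using hv.sum_inner_products_le (s := univ) (toLp 2 (M a))

theorem sum_norm_sq_toEuclideanLin_eq {ι : Type*} [Fintype ι]
    (b : OrthonormalBasis ι ℝ (EuclideanSpace ℝ n)) (M : Matrix m n ℝ) :
    ∑ i, ‖toEuclideanLin M (b i)‖ ^ 2 = frobM M ^ 2 := by
  simp_rw [frobM_sq_eq_sum_norm_sq_row, norm_sq_toEuclideanLin]
  rw [sum_comm]
  simp_rw [b.sum_sq_inner_left]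

end Frobenius

section Gram

variable {m n : Type*} [Fintype m] [Fintype n] [DecidableEq n] (A : Matrix m n ℝ)

/-- The squared singular values of `A`. -/
noncomputable abbrev gramEigenvalues : n → ℝ :=
  (isHermitian_conjTranspose_mul_self A).eigenvalues

noncomputable abbrev gramEigenbasis : OrthonormalBasis n ℝ (EuclideanSpace ℝ n) :=
  (isHermitian_conjTranspose_mul_self A).eigenvectorBasis

theorem gramEigenvalues_nonneg : 0 ≤ gramEigenvalues A :=
  eigenvalues_conjTranspose_mul_self_nonneg A

theorem card_gramEigenvalues_ne_zero : #{j | gramEigenvalues A j ≠ 0} = A.rank := by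
  rw [← rank_conjTranspose_mul_self,
    (isHermitian_conjTranspose_mul_self A).rank_eq_card_non_zero_eigs, Fintype.card_subtype]

theorem toEuclideanLin_gram_gramEigenbasis (j : n) :
    toEuclideanLin (Aᴴ * A) (gramEigenbasis A j) = gramEigenvalues A j • gramEigenbasis A j := by
  apply WithLp.ofLp_injective
  simp only [toLpLin_apply, WithLp.ofLp_toLp, WithLp.ofLp_smul]
  exact (isHermitian_conjTranspose_mul_self A).mulVec_eigenvectorBasis j

theorem norm_sq_toEuclideanLin_eq_sum_gramEigenvalues (x : EuclideanSpace ℝ n) :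
    ‖toEuclideanLin A x‖ ^ 2 = ∑ j, gramEigenvalues A j * ⟪gramEigenbasis A j, x⟫ ^ 2 := by
  classical
  have hsymm := isSymmetric_toEuclideanLin_iff.mpr (isHermitian_conjTranspose_mul_self A)
  rw [← real_inner_self_eq_norm_sq, ← LinearMap.adjoint_inner_right,
    ← toEuclideanLin_conjTranspose_eq_adjoint, ← LinearMap.comp_apply, ← toLpLin_mul_same,
    ← (gramEigenbasis A).sum_inner_mul_inner]
  refine sum_congr rfl fun j _ => ?_
  rw [← hsymm, toEuclideanLin_gram_gramEigenbasis, real_inner_smul_left, real_inner_comm]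
  ring

theorem norm_sq_toEuclideanLin_gramEigenbasis (j : n) :
    ‖toEuclideanLin A (gramEigenbasis A j)‖ ^ 2 = gramEigenvalues A j := by
  rw [norm_sq_toEuclideanLin_eq_sum_gramEigenvalues, sum_eq_single j]
  · simp
  · intro i _ hij
    simp [(gramEigenbasis A).orthonormal.2 hij]
  · simp

end Gram

section Projection

variable {m n : Type*} [Fintype m] [Fintype n] [DecidableEq n]

theorem rank_eq_finrank_range_toEuclideanLin (M : Matrix m n ℝ) :
    M.rank = Module.finrank ℝ (LinearMap.range (toEuclideanLin M)) :=
  M.rank_eq_finrank_range_toLin (EuclideanSpace.basisFun m ℝ).toBasis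
    (EuclideanSpace.basisFun n ℝ).toBasis

noncomputable def starProjectionMatrix (K : Submodule ℝ (EuclideanSpace ℝ n)) : Matrix n n ℝ :=
  toEuclideanLin.symm K.starProjection.toLinearMap

theorem toEuclideanLin_starProjectionMatrix (K : Submodule ℝ (EuclideanSpace ℝ n)) :
    toEuclideanLin (starProjectionMatrix K) = K.starProjection.toLinearMap :=
  toEuclideanLin.apply_symm_apply _

theorem rank_starProjectionMatrix (K : Submodule ℝ (EuclideanSpace ℝ n)) :
    (starProjectionMatrix K).rank = Module.finrank ℝ K := by
  rw [rank_eq_finrank_range_toEuclideanLin, toEuclideanLin_starProjectionMatrix,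
    K.range_starProjection]

theorem frobM_sq_sub_eq_add_of_range_le [DecidableEq m] (K : Submodule ℝ (EuclideanSpace ℝ m))
    {A W : Matrix m n ℝ} (hW : LinearMap.range (toEuclideanLin W) ≤ K) :
    frobM (A - W) ^ 2 =
      frobM (A - starProjectionMatrix K * A) ^ 2 + frobM (starProjectionMatrix K * A - W) ^ 2 := by
  simp_rw [← sum_norm_sq_toEuclideanLin_eq (EuclideanSpace.basisFun n ℝ), ← sum_add_distrib]
  refine sum_congr rfl fun j _ => ?_
  set a := toEuclideanLin A (EuclideanSpace.basisFun n ℝ j)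
  set w := toEuclideanLin W (EuclideanSpace.basisFun n ℝ j)
  have ha : a - K.starProjection a ∈ Kᗮ := K.sub_starProjection_mem_orthogonal a
  have hw : K.starProjection a - w ∈ K := sub_mem (K.starProjection_apply_mem a) (hW ⟨_, rfl⟩)
  have hsplit : a - w = (a - K.starProjection a) + (K.starProjection a - w) := by abel
  simp only [map_sub, toLpLin_mul_same, LinearMap.sub_apply, LinearMap.comp_apply,
    toEuclideanLin_starProjectionMatrix]
  rw [hsplit, norm_add_sq_real, K.inner_left_of_mem_orthogonal hw ha, mul_zero, add_zero]
  rfl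

end Projection

theorem exists_eq_mul_of_forall_frobM_le {m n : Type*} [Fintype m] [Fintype n] {r : ℕ}
    {A W : Matrix m n ℝ} (hWr : W.rank ≤ r)
    (hW : ∀ M : Matrix m n ℝ, M.rank ≤ r → frobM (A - W) ≤ frobM (A - M)) :
    ∃ P : Matrix m m ℝ, W = P * A := by
  classical
  set K := LinearMap.range (toEuclideanLin W)
  refine ⟨starProjectionMatrix K, ?_⟩
  have hrank : (starProjectionMatrix K * A).rank ≤ r := by
    refine (rank_mul_le_left _ _).trans ?_
    rwa [rank_starProjectionMatrix, ← rank_eq_finrank_range_toEuclideanLin]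
  have hpyth := frobM_sq_sub_eq_add_of_range_le K (A := A) le_rfl
  have hmin := pow_le_pow_left₀ (frobM_nonneg _) (hW _ hrank) 2
  have hzero : frobM (starProjectionMatrix K * A - W) ^ 2 = 0 :=
    le_antisymm (by linarith) (sq_nonneg _)
  rw [pow_eq_zero_iff two_ne_zero, frobM_eq_norm, norm_eq_zero, sub_eq_zero] at hzero
  exact hzero.symm

section Truncation

variable {m n : Type*} [Fintype m] [Fintype n] [DecidableEq n]

theorem exists_rank_le_frobM_sq_sub_eq (A : Matrix m n ℝ) (S : Finset n) :
    ∃ M : Matrix m n ℝ, M.rank ≤ #S ∧ frobM (A - M) ^ 2 = ∑ j ∈ Sᶜ, gramEigenvalues A j := by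
  set e := gramEigenbasis A
  set K := Submodule.span ℝ (Set.range fun i : S => e i)
  refine ⟨A * starProjectionMatrix K, ?_, ?_⟩
  · refine (rank_mul_le_right _ _).trans ?_
    rw [rank_starProjectionMatrix]
    exact (finrank_range_le_card (R := ℝ) fun i : S => e i).trans_eq (Fintype.card_coe S)
  have happly (j : n) : toEuclideanLin (A - A * starProjectionMatrix K) (e j) =
      toEuclideanLin A (e j - K.starProjection (e j)) := by
    simp [toEuclideanLin_starProjectionMatrix]
  rw [← sum_norm_sq_toEuclideanLin_eq e, ← sum_add_sum_compl S, sum_eq_zero, zero_add]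
  · refine sum_congr rfl fun j hj => ?_
    have horth : e j ∈ Kᗮ := by
      refine (Submodule.isOrtho_span.2 ?_).le (Submodule.subset_span (Set.mem_singleton (e j)))
      rintro _ rfl _ ⟨i, rfl⟩
      exact e.orthonormal.2 fun hji => mem_compl.1 hj (hji ▸ i.2)
    rw [happly, K.starProjection_apply_eq_zero_iff.2 horth, sub_zero,
      norm_sq_toEuclideanLin_gramEigenbasis]
  · intro j hj
    have hmem : e j ∈ K := Submodule.subset_span ⟨⟨j, hj⟩, rfl⟩
    rw [happly, K.starProjection_eq_self_iff.2 hmem, sub_self, map_zero, norm_zero,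
      zero_pow two_ne_zero]

theorem exists_weights_sum_gramEigenvalues_mul_le (A B : Matrix m n ℝ) :
    ∃ t : n → ℝ, 0 ≤ t ∧ t ≤ 1 ∧ (Fintype.card n : ℝ) ≤ ∑ j, t j + B.rank ∧
      ∑ j, gramEigenvalues A j * t j ≤ frobM (A - B) ^ 2 := by
  set e := gramEigenbasis A
  set K := LinearMap.ker (toEuclideanLin B)
  set u := stdOrthonormalBasis ℝ K
  set v : Fin (Module.finrank ℝ K) → EuclideanSpace ℝ n := fun i => u i
  have hv : Orthonormal ℝ v := u.orthonormal.comp_linearIsometry K.subtypeₗᵢ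
  have hBv (i) : toEuclideanLin B (v i) = 0 := (u i).2
  have hdim : Module.finrank ℝ K + B.rank = Fintype.card n := by
    rw [rank_eq_finrank_range_toEuclideanLin, add_comm, LinearMap.finrank_range_add_finrank_ker,
      finrank_euclideanSpace]
  refine ⟨fun j => ∑ i, ⟪v i, e j⟫ ^ 2, fun j => sum_nonneg fun i _ => sq_nonneg _,
    fun j => ?_, ?_, ?_⟩
  · simpa [e.orthonormal.1 j] using hv.sum_inner_products_le (s := univ) (e j)
  · have hsum : ∑ j, ∑ i, ⟪v i, e j⟫ ^ 2 = Module.finrank ℝ K := by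
      rw [sum_comm]
      simp [e.sum_sq_inner_left, hv.1]
    rw [hsum]
    exact_mod_cast hdim.ge
  · calc ∑ j, gramEigenvalues A j * ∑ i, ⟪v i, e j⟫ ^ 2
        = ∑ i, ‖toEuclideanLin (A - B) (v i)‖ ^ 2 := by
          simp_rw [map_sub, LinearMap.sub_apply, hBv, sub_zero,
            norm_sq_toEuclideanLin_eq_sum_gramEigenvalues, mul_sum, real_inner_comm (v _)]
          exact sum_comm
      _ ≤ frobM (A - B) ^ 2 := sum_norm_sq_toEuclideanLin_le hv _

end Truncation

section Threshold

variable {n : Type*} [Fintype n]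

theorem exists_card_eq_forall_le (ν : n → ℝ) {r : ℕ} (hr : r ≤ Fintype.card n) :
    ∃ S : Finset n, #S = r ∧ ∀ i ∈ S, ∀ j ∉ S, ν j ≤ ν i := by
  classical
  obtain ⟨S, hS, hmax⟩ := (powersetCard r (univ : Finset n)).exists_max_image
    (fun S => ∑ i ∈ S, ν i) (powersetCard_nonempty.2 (by simpa using hr))
  rw [mem_powersetCard] at hS
  refine ⟨S, hS.2, fun i hi j hj => ?_⟩
  by_contra! hlt
  have hj' : j ∉ S.erase i := fun h => hj (mem_of_mem_erase h)
  have hcard : #(insert j (S.erase i)) = r := by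
    rw [card_insert_of_notMem hj', card_erase_of_mem hi, hS.2,
      Nat.sub_add_cancel (hS.2 ▸ card_pos.2 ⟨i, hi⟩)]
  have hle := hmax _ (mem_powersetCard.2 ⟨subset_univ _, hcard⟩)
  rw [sum_insert hj', ← add_sum_erase S ν hi] at hle
  linarith

variable [DecidableEq n] {ν : n → ℝ} {S : Finset n} {c : ℝ}

theorem sum_compl_le_of_forall_le {r₀ : ℕ} (hsupp : #{j | ν j ≠ 0} ≤ r₀)
    (hc : 0 ≤ c) (hS : ∀ i ∈ S, c ≤ ν i) (hSc : ∀ j ∉ S, ν j ≤ c) :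
    ∑ j ∈ Sᶜ, ν j ≤ ((r₀ : ℝ) - #S) * c := by
  rcases hc.eq_or_lt with hc | hc
  · rw [← hc, mul_zero]
    exact sum_nonpos fun j hj => hc ▸ hSc j (mem_compl.1 hj)
  set T := {j ∈ Sᶜ | ν j ≠ 0}
  have hdisj : Disjoint T S := disjoint_left.2 fun j hj => mem_compl.1 (mem_filter.1 hj).1
  have hsub : T ∪ S ⊆ ({j | ν j ≠ 0} : Finset n) :=
    union_subset (monotone_filter_left _ (subset_univ _))
      fun i hi => mem_filter.2 ⟨mem_univ i, (hc.trans_le (hS i hi)).ne'⟩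
  have hcard : #T + #S ≤ r₀ := by
    rw [← card_union_of_disjoint hdisj]
    exact (card_le_card hsub).trans hsupp
  calc ∑ j ∈ Sᶜ, ν j = ∑ j ∈ T, ν j := (sum_filter_ne_zero _).symm
    _ ≤ #T • c := sum_le_card_nsmul T ν c fun j hj => hSc j (mem_compl.1 (mem_filter.1 hj).1)
    _ ≤ ((r₀ : ℝ) - #S) * c := by
      rw [nsmul_eq_mul]
      gcongr
      rw [le_sub_iff_add_le]
      exact_mod_cast hcard

theorem sum_compl_add_le_sum_mul {t : n → ℝ} (ht₀ : 0 ≤ t) (ht₁ : t ≤ 1)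
    (hS : ∀ i ∈ S, c ≤ ν i) (hSc : ∀ j ∉ S, ν j ≤ c) :
    ∑ j ∈ Sᶜ, ν j + c * (∑ j, t j - #Sᶜ) ≤ ∑ j, ν j * t j := by
  have hin : ∑ j ∈ S, c * t j ≤ ∑ j ∈ S, ν j * t j :=
    sum_le_sum fun j hj => mul_le_mul_of_nonneg_right (hS j hj) (ht₀ j)
  have hout : ∑ j ∈ Sᶜ, (ν j + c * (t j - 1)) ≤ ∑ j ∈ Sᶜ, ν j * t j := by
    refine sum_le_sum fun j hj => ?_
    have := mul_nonneg (sub_nonneg.2 (hSc j (mem_compl.1 hj))) (sub_nonneg.2 (ht₁ j))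
    simp only [Pi.one_apply] at this
    linarith
  calc ∑ j ∈ Sᶜ, ν j + c * (∑ j, t j - #Sᶜ)
      = ∑ j ∈ S, c * t j + ∑ j ∈ Sᶜ, (ν j + c * (t j - 1)) := by
        rw [← sum_add_sum_compl S t, sum_add_distrib, ← mul_sum, ← mul_sum, sum_sub_distrib]
        simp only [sum_const, nsmul_eq_mul, mul_one]
        ring
    _ ≤ ∑ j ∈ S, ν j * t j + ∑ j ∈ Sᶜ, ν j * t j := add_le_add hin hout
    _ = ∑ j, ν j * t j := sum_add_sum_compl S _

theorem exists_card_le_sum_compl_le {t : n → ℝ} {r₀ r₁ r₂ : ℕ} (hν : 0 ≤ ν)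
    (hsupp : #{j | ν j ≠ 0} ≤ r₀) (ht₀ : 0 ≤ t) (ht₁ : t ≤ 1)
    (hsum : (Fintype.card n : ℝ) ≤ ∑ j, t j + r₁) (h12 : r₁ < r₂) (h20 : r₂ < r₀) :
    ∃ S : Finset n, #S ≤ r₂ ∧
      ((r₀ : ℝ) - r₁) * ∑ j ∈ Sᶜ, ν j ≤ ((r₀ : ℝ) - r₂) * ∑ j, ν j * t j := by
  have h02 : (0 : ℝ) ≤ r₀ - r₂ := sub_nonneg.2 (by exact_mod_cast h20.le)
  have h12' : (0 : ℝ) ≤ r₂ - r₁ := sub_nonneg.2 (by exact_mod_cast h12.le)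
  rcases le_or_gt (Fintype.card n) r₂ with hn | hn
  · refine ⟨univ, by simpa using hn, ?_⟩
    simpa using mul_nonneg h02 (sum_nonneg fun j _ => mul_nonneg (hν j) (ht₀ j))
  obtain ⟨S, hS, hSmax⟩ := exists_card_eq_forall_le ν hn.le
  have hSne : S.Nonempty := card_pos.1 (by omega)
  set c := S.inf' hSne ν
  have hcS (i) (hi : i ∈ S) : c ≤ ν i := inf'_le _ hi
  have hSc (j) (hj : j ∉ S) : ν j ≤ c := le_inf' _ _ fun i hi => hSmax i hi j hj
  have hc : 0 ≤ c := le_inf' _ _ fun i _ => hν i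
  have htail := sum_compl_le_of_forall_le hsupp hc hcS hSc
  have hhead := sum_compl_add_le_sum_mul ht₀ ht₁ hcS hSc
  have hcard : (#Sᶜ : ℝ) = Fintype.card n - r₂ := by
    rw [card_compl, hS, Nat.cast_sub hn.le]
  have hmass : (r₂ : ℝ) - r₁ ≤ ∑ j, t j - #Sᶜ := by
    rw [hcard]
    linarith
  have hhead' : ∑ j ∈ Sᶜ, ν j + ((r₂ : ℝ) - r₁) * c ≤ ∑ j, ν j * t j := by
    linarith [mul_le_mul_of_nonneg_right hmass hc]
  rw [hS] at htail
  refine ⟨S, hS.le, ?_⟩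
  linarith [mul_le_mul_of_nonneg_left htail h12', mul_le_mul_of_nonneg_left hhead' h02]

end Threshold

theorem frobM_sub_le_of_forall_frobM_le {m n : Type*} [Fintype m] [Fintype n] {r₀ r₁ r₂ : ℕ}
    (h12 : r₁ < r₂) (h20 : r₂ < r₀) {A B W : Matrix m n ℝ} (hA : A.rank ≤ r₀)
    (hB : B.rank ≤ r₁) (hW : ∀ M : Matrix m n ℝ, M.rank ≤ r₂ → frobM (A - W) ≤ frobM (A - M)) :
    frobM (A - W) ≤ √(((r₀ : ℝ) - r₂) / ((r₀ : ℝ) - r₁)) * frobM (A - B) := by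
  classical
  obtain ⟨t, ht₀, ht₁, hsum, hle⟩ := exists_weights_sum_gramEigenvalues_mul_le A B
  obtain ⟨S, hS, hSsum⟩ := exists_card_le_sum_compl_le (gramEigenvalues_nonneg A)
    ((card_gramEigenvalues_ne_zero A).trans_le hA) ht₀ ht₁ (hsum.trans (by gcongr)) h12 h20
  obtain ⟨M, hM, hAM⟩ := exists_rank_le_frobM_sq_sub_eq A S
  have h01 : (0 : ℝ) < r₀ - r₁ := sub_pos.2 (by exact_mod_cast h12.trans h20)
  have hratio : 0 ≤ ((r₀ : ℝ) - r₂) / (r₀ - r₁) :=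
    div_nonneg (sub_nonneg.2 (by exact_mod_cast h20.le)) h01.le
  have hsq : frobM (A - W) ^ 2 ≤ ((r₀ : ℝ) - r₂) / (r₀ - r₁) * frobM (A - B) ^ 2 :=
    calc frobM (A - W) ^ 2 ≤ frobM (A - M) ^ 2 :=
          pow_le_pow_left₀ (frobM_nonneg _) (hW M (hM.trans hS)) 2
      _ = ∑ j ∈ Sᶜ, gramEigenvalues A j := hAM
      _ ≤ ((r₀ : ℝ) - r₂) / (r₀ - r₁) * ∑ j, gramEigenvalues A j * t j := by
          rw [div_mul_eq_mul_div, le_div_iff₀ h01]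
          linarith
      _ ≤ ((r₀ : ℝ) - r₂) / (r₀ - r₁) * frobM (A - B) ^ 2 := by gcongr
  rw [← Real.sqrt_sq (frobM_nonneg (A - W)), ← Real.sqrt_sq (frobM_nonneg (A - B)),
    ← Real.sqrt_mul hratio]
  exact Real.sqrt_le_sqrt hsq

theorem dist_le_of_successive_contractions {E : Type*} [PseudoMetricSpace E] {β : ℝ}
    (hβ : 0 ≤ β) {y z w₁ w₂ w₃ : E} (h₁ : dist z w₁ ≤ β * dist z y)
    (h₂ : dist w₁ w₂ ≤ β * dist w₁ y) (h₃ : dist w₂ w₃ ≤ β * dist w₂ y) :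
    dist w₃ z ≤ (3 * β + 3 * β ^ 2 + β ^ 3) * dist y z := by
  have ha : dist z w₁ ≤ β * dist y z := dist_comm z y ▸ h₁
  have hw₁ : dist w₁ y ≤ (β + 1) * dist y z := by
    linarith [dist_triangle w₁ z y, dist_comm w₁ z, dist_comm z y]
  have hb : dist w₁ w₂ ≤ (β ^ 2 + β) * dist y z :=
    h₂.trans ((mul_le_mul_of_nonneg_left hw₁ hβ).trans_eq (by ring))
  have hw₂ : dist w₂ y ≤ (β ^ 2 + 2 * β + 1) * dist y z := by
    linarith [dist_triangle w₂ w₁ y, dist_comm w₂ w₁]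
  have hc : dist w₂ w₃ ≤ (β ^ 3 + 2 * β ^ 2 + β) * dist y z :=
    h₃.trans ((mul_le_mul_of_nonneg_left hw₂ hβ).trans_eq (by ring))
  linarith [dist_triangle4 w₃ w₂ w₁ z, dist_comm w₃ w₂, dist_comm w₂ w₁, dist_comm w₁ z]

section Tensor

variable {d₁ d₂ d₃ : ℕ}

theorem frobM_mat1_sub_mat1 (X Y : Fin d₁ → Fin d₂ → Fin d₃ → ℝ) :
    frobM (mat1 X - mat1 Y) = frobT (X - Y) := by
  simp only [frobM, frobT, mat1, Matrix.sub_apply, of_apply, Pi.sub_apply, Fintype.sum_prod_type]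

theorem frobM_mat2_sub_mat2 (X Y : Fin d₁ → Fin d₂ → Fin d₃ → ℝ) :
    frobM (mat2 X - mat2 Y) = frobT (X - Y) := by
  simp only [frobM, frobT, mat2, Matrix.sub_apply, of_apply, Pi.sub_apply, Fintype.sum_prod_type]
  rw [sum_comm]

theorem frobM_mat3_sub_mat3 (X Y : Fin d₁ → Fin d₂ → Fin d₃ → ℝ) :
    frobM (mat3 X - mat3 Y) = frobT (X - Y) := by
  simp only [frobM, frobT, mat3, Matrix.sub_apply, of_apply, Pi.sub_apply, Fintype.sum_prod_type]
  rw [sum_comm]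
  simp_rw [sum_comm (γ := Fin d₃)]

theorem frobT_sub_eq_dist (X Y : Fin d₁ → Fin d₂ → Fin d₃ → ℝ) :
    frobT (X - Y) = dist (mat1 X) (mat1 Y) := by
  rw [dist_eq_norm, ← frobM_eq_norm, frobM_mat1_sub_mat1]

variable {W Z : Fin d₁ → Fin d₂ → Fin d₃ → ℝ}

theorem rank_mat2_le_of_mat1_eq_mul {P : Matrix (Fin d₁) (Fin d₁) ℝ} (h : mat1 W = P * mat1 Z) :
    (mat2 W).rank ≤ (mat2 Z).rank := by
  have hmat2 : mat2 W = mat2 Z * (Pᵀ ⊗ₖ (1 : Matrix (Fin d₃) (Fin d₃) ℝ)) := by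
    ext j ⟨i, k⟩
    have hW : W i j k = ∑ i', P i i' * Z i' j k := congr_fun₂ h i (j, k)
    rw [mul_apply, Fintype.sum_prod_type]
    simp [mat2, hW, one_apply, mul_comm]
  rw [hmat2]
  exact rank_mul_le_left _ _

theorem rank_mat3_le_of_mat1_eq_mul {P : Matrix (Fin d₁) (Fin d₁) ℝ} (h : mat1 W = P * mat1 Z) :
    (mat3 W).rank ≤ (mat3 Z).rank := by
  have hmat3 : mat3 W = mat3 Z * (Pᵀ ⊗ₖ (1 : Matrix (Fin d₂) (Fin d₂) ℝ)) := by
    ext k ⟨i, j⟩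
    have hW : W i j k = ∑ i', P i i' * Z i' j k := congr_fun₂ h i (j, k)
    rw [mul_apply, Fintype.sum_prod_type]
    simp [mat3, hW, one_apply, mul_comm]
  rw [hmat3]
  exact rank_mul_le_left _ _

theorem rank_mat3_le_of_mat2_eq_mul {Q : Matrix (Fin d₂) (Fin d₂) ℝ} (h : mat2 W = Q * mat2 Z) :
    (mat3 W).rank ≤ (mat3 Z).rank := by
  have hmat3 : mat3 W = mat3 Z * ((1 : Matrix (Fin d₁) (Fin d₁) ℝ) ⊗ₖ Qᵀ) := by
    ext k ⟨i, j⟩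
    have hW : W i j k = ∑ j', Q j j' * Z i j' k := congr_fun₂ h j (i, k)
    rw [mul_apply, Fintype.sum_prod_type]
    simp [mat3, hW, one_apply, mul_comm]
  rw [hmat3]
  exact rank_mul_le_left _ _

end Tensor

theorem stmt5_general {d₁ d₂ d₃ : ℕ} (r₀ r₁ r₂ : ℕ) (h12 : r₁ < r₂) (h20 : r₂ < r₀)
    (Z Y : Fin d₁ → Fin d₂ → Fin d₃ → ℝ)
    (hZ : memTheta3 Z r₀) (hY : memTheta3 Y r₁)
    -- successive approximate projections:
    (W₁ W₂ W₃ : Fin d₁ → Fin d₂ → Fin d₃ → ℝ)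
    (hW₁rank : (mat1 W₁).rank ≤ r₂)
    (hW₁best : ∀ M : Matrix (Fin d₁) (Fin d₂ × Fin d₃) ℝ, M.rank ≤ r₂ →
      frobM (mat1 Z - mat1 W₁) ≤ frobM (mat1 Z - M))
    (hW₂rank : (mat2 W₂).rank ≤ r₂)
    (hW₂best : ∀ M : Matrix (Fin d₂) (Fin d₁ × Fin d₃) ℝ, M.rank ≤ r₂ →
      frobM (mat2 W₁ - mat2 W₂) ≤ frobM (mat2 W₁ - M))
    (hW₃best : ∀ M : Matrix (Fin d₃) (Fin d₁ × Fin d₂) ℝ, M.rank ≤ r₂ →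
      frobM (mat3 W₂ - mat3 W₃) ≤ frobM (mat3 W₂ - M)) :
    frobT (W₃ - Z) ≤
      (3 * Real.sqrt (((r₀ - r₂ : ℕ) : ℝ) / ((r₀ - r₁ : ℕ) : ℝ)) +
        3 * Real.sqrt (((r₀ - r₂ : ℕ) : ℝ) / ((r₀ - r₁ : ℕ) : ℝ)) ^ 2 +
        Real.sqrt (((r₀ - r₂ : ℕ) : ℝ) / ((r₀ - r₁ : ℕ) : ℝ)) ^ 3) *
        frobT (Y - Z) := by
  rw [Nat.cast_sub h20.le, Nat.cast_sub (h12.trans h20).le]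
  obtain ⟨P, hP⟩ := exists_eq_mul_of_forall_frobM_le hW₁rank hW₁best
  obtain ⟨Q, hQ⟩ := exists_eq_mul_of_forall_frobM_le hW₂rank hW₂best
  have hW₁ : (mat2 W₁).rank ≤ r₀ := (rank_mat2_le_of_mat1_eq_mul hP).trans hZ.2.1
  have hW₂ : (mat3 W₂).rank ≤ r₀ :=
    ((rank_mat3_le_of_mat2_eq_mul hQ).trans (rank_mat3_le_of_mat1_eq_mul hP)).trans hZ.2.2
  have h₁ := frobM_sub_le_of_forall_frobM_le h12 h20 hZ.1 hY.1 hW₁best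
  have h₂ := frobM_sub_le_of_forall_frobM_le h12 h20 hW₁ hY.2.1 hW₂best
  have h₃ := frobM_sub_le_of_forall_frobM_le h12 h20 hW₂ hY.2.2 hW₃best
  simp only [frobM_mat1_sub_mat1, frobM_mat2_sub_mat2, frobM_mat3_sub_mat3, frobT_sub_eq_dist]
    at h₁ h₂ h₃ ⊢
  exact dist_le_of_successive_contractions (Real.sqrt_nonneg _) h₁ h₂ h₃

theorem stmt5 {d₁ d₂ d₃ : ℕ} (r₀ r₁ r₂ : ℕ) (h12 : r₁ < r₂) (h20 : r₂ < r₀)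
    (Z Y : Fin d₁ → Fin d₂ → Fin d₃ → ℝ)
    (hZ : memTheta3 Z r₀) (hY : memTheta3 Y r₁)
    -- successive approximate projections:
    (W₁ W₂ W₃ : Fin d₁ → Fin d₂ → Fin d₃ → ℝ)
    (hW₁rank : (mat1 W₁).rank ≤ r₂)
    (hW₁best : ∀ M : Matrix (Fin d₁) (Fin d₂ × Fin d₃) ℝ, M.rank ≤ r₂ →
      frobM (mat1 Z - mat1 W₁) ≤ frobM (mat1 Z - M))
    (hW₂rank : (mat2 W₂).rank ≤ r₂)
    (hW₂best : ∀ M : Matrix (Fin d₂) (Fin d₁ × Fin d₃) ℝ, M.rank ≤ r₂ →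
      frobM (mat2 W₁ - mat2 W₂) ≤ frobM (mat2 W₁ - M))
    (hW₃rank : (mat3 W₃).rank ≤ r₂)
    (hW₃best : ∀ M : Matrix (Fin d₃) (Fin d₁ × Fin d₂) ℝ, M.rank ≤ r₂ →
      frobM (mat3 W₂ - mat3 W₃) ≤ frobM (mat3 W₂ - M)) :
    frobT (W₃ - Z) ≤
      (3 * Real.sqrt (((r₀ - r₂ : ℕ) : ℝ) / ((r₀ - r₁ : ℕ) : ℝ)) +
        3 * Real.sqrt (((r₀ - r₂ : ℕ) : ℝ) / ((r₀ - r₁ : ℕ) : ℝ)) ^ 2 +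
        Real.sqrt (((r₀ - r₂ : ℕ) : ℝ) / ((r₀ - r₁ : ℕ) : ℝ)) ^ 3) *
        frobT (Y - Z) :=
  stmt5_general r₀ r₁ r₂ h12 h20 Z Y hZ hY W₁ W₂ W₃ hW₁rank hW₁best hW₂rank hW₂best hW₃best
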